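/- Suppose a set of players, each initially holding at most L = log_{1/2}(ε') + 1 'stones' capacity, has total size m, and in each of k good rounds at least m'/3 stones are distributed where m' > 2m/3 is the current number of active players; a player becomes inactive upon receiving L stones. Then after k ≥ (9/2)·L good rounds, the number of active players is at most 2m/3. -/
import Mathlib


/-- Stone-counting argument: players start with `0` stones, each active player
holds fewer than `L` stones (becoming inactive upon reaching `L` stones, so
everyone always holds at most `L`), the active sets `A k` are decreasing with
`|A 0| = m`, and each of the first `K` good rounds distributes at least
`|A k|/3` stones among the players. If `K ≥ (9/2)·L`, then at most `2m/3`
players remain active. -/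
theorem stones_halving_argument {ι : Type*} [Fintype ι]
    (A : ℕ → Finset ι) (stones : ℕ → ι → ℝ) (L : ℝ) (K m : ℕ)
    (hL : 0 < L)
    (hdec : ∀ k, A (k + 1) ⊆ A k) (hm : (A 0).card = m)
    (hinit : ∀ q, stones 0 q = 0)
    (hmono : ∀ k q, stones k q ≤ stones (k + 1) q)
    (hcap : ∀ k q, stones k q ≤ L)
    (hactive : ∀ k, ∀ q ∈ A k, stones k q < L)
    (hgood : ∀ k < K, ∑ q ∈ A 0, (stones (k + 1) q - stones k q) ≥ ((A k).card : ℝ) / 3)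
    (hK : (K : ℝ) ≥ (9 / 2) * L) :
    ((A K).card : ℝ) ≤ 2 * m / 3 := by
  by_contra hcontra
  push_neg at hcontra
  -- A is antitone
  have hsub : ∀ k, A k ⊆ A 0 := by
    intro k
    induction k with
    | zero => exact subset_rfl
    | succ n ih => exact (hdec n).trans ih
  have hsubK : ∀ k ≤ K, A K ⊆ A k := by
    intro k hk
    clear hgood hK hcontra
    induction K, hk using Nat.le_induction with
    | base => exact subset_rfl
    | succ n hn ih => exact (hdec n).trans ih
  have hm0 : (0:ℝ) < m := by
    by_contra h
    push_neg at h
    have : ((A K).card : ℝ) ≤ m := by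
      exact_mod_cast Nat.cast_le.mpr (hm ▸ Finset.card_le_card (hsub K))
    nlinarith
  -- telescoping sum
  have htel : ∑ q ∈ A 0, stones K q =
      ∑ k ∈ Finset.range K, ∑ q ∈ A 0, (stones (k + 1) q - stones k q) := by
    rw [Finset.sum_comm]
    apply Finset.sum_congr rfl
    intro q _
    rw [Finset.sum_range_sub (fun k => stones k q)]
    rw [hinit q]; ring
  have hub : ∑ q ∈ A 0, stones K q ≤ m * L := by
    calc ∑ q ∈ A 0, stones K q ≤ ∑ q ∈ A 0, L :=
          Finset.sum_le_sum (fun q _ => hcap K q)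
      _ = m * L := by rw [Finset.sum_const, hm, nsmul_eq_mul]
  have hKpos : 0 < K := by
    by_contra h
    push_neg at h
    interval_cases K
    simp at hK
    nlinarith
  have hlb : ∀ k < K, ((A k).card : ℝ) > 2 * m / 3 := by
    intro k hk
    have : ((A K).card : ℝ) ≤ ((A k).card : ℝ) := by
      exact_mod_cast Finset.card_le_card (hsubK k (le_of_lt hk))
    linarith
  have hsum_lb : ∑ k ∈ Finset.range K, ∑ q ∈ A 0, (stones (k + 1) q - stones k q)
      > K * (2 * m / 9) := by
    have : ∀ k ∈ Finset.range K,
        (2 * m / 9 : ℝ) < ∑ q ∈ A 0, (stones (k + 1) q - stones k q) := by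
      intro k hk
      rw [Finset.mem_range] at hk
      have h1 := hgood k hk
      have h2 := hlb k hk
      linarith
    calc (K : ℝ) * (2 * m / 9) = ∑ _k ∈ Finset.range K, (2 * m / 9 : ℝ) := by
          rw [Finset.sum_const, Finset.card_range, nsmul_eq_mul]
      _ < _ := Finset.sum_lt_sum_of_nonempty ⟨0, Finset.mem_range.mpr hKpos⟩ this
  have : (K : ℝ) * (2 * m / 9) < m * L := by
    rw [← htel] at hsum_lb
    linarith
  nlinarith
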